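/- arXiv:2003.05191 — 3 statements merged into one kernel-verified Lean document; each statement's English description precedes it below -/
import Mathlib

section
/- Let (α, 𝒜) and (H, ℋ) be measurable spaces, ⊥ an element of H with {⊥} ∈ ℋ, step : α → α a measurable function, and extract : α → H a measurable function satisfying: for every a ∈ α, either extract a = ⊥ or extract (step a) = extract a. Then there exists a measurable function F : α → H such that (i) for every a ∈ α and every n ∈ ℕ, if extract (step^[n] a) ≠ ⊥ then F a = extract (step^[n] a), and (ii) for every a ∈ α, if extract (step^[n] a) = ⊥ for all n ∈ ℕ, then F a = ⊥. (F is the pointwise supremum, in the flat order on H, of the functions extract ∘ step^[n] for n ∈ ℕ.) -/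
/-- Given measurable `step : α → α` and `extract : α → H` satisfying the flat-order monotonicity
condition with respect to a bottom element `bot` (with `{bot}` measurable), the pointwise supremum
(in the flat order) of the functions `extract ∘ step^[n]` exists and is measurable: there is a
measurable `F : α → H` such that `F a = extract (step^[n] a)` whenever the latter is not `bot`,
and `F a = bot` when `extract (step^[n] a) = bot` for all `n`. -/
theorem exists_measurable_final {α H : Type*} [MeasurableSpace α] [MeasurableSpace H]
    (bot : H) (hbot : MeasurableSet ({bot} : Set H))
    (step : α → α) (hstep : Measurable step)
    (extract : α → H) (hextract : Measurable extract)
    (hmono : ∀ a : α, extract a = bot ∨ extract (step a) = extract a) :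
    ∃ F : α → H, Measurable F ∧
      (∀ a : α, ∀ n : ℕ, extract (step^[n] a) ≠ bot → F a = extract (step^[n] a)) ∧
      (∀ a : α, (∀ n : ℕ, extract (step^[n] a) = bot) → F a = bot) := by
  classical
  -- once the extracted value is non-bot, it stays constant along the orbit
  have key : ∀ a : α, ∀ m n : ℕ, m ≤ n → extract (step^[m] a) ≠ bot →
      extract (step^[n] a) = extract (step^[m] a) := by
    intro a m n hmn hne
    induction n, hmn using Nat.le_induction with
    | base => rfl
    | succ k hk ih =>
        rw [Function.iterate_succ_apply']
        rcases hmono (step^[k] a) with h | h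
        · exact absurd (ih ▸ h) hne
        · rw [h, ih]
  set p : ℕ → α → Prop := fun n a =>
    extract (step^[n] a) ≠ bot ∨ ∀ k : ℕ, extract (step^[k] a) = bot with hp
  have hex : ∀ a, ∃ n, p n a := by
    intro a
    by_cases h : ∀ k : ℕ, extract (step^[k] a) = bot
    · exact ⟨0, Or.inr h⟩
    · push_neg at h
      obtain ⟨n, hn⟩ := h
      exact ⟨n, Or.inl hn⟩
  refine ⟨fun a => extract (step^[Nat.find (hex a)] a), ?_, ?_, ?_⟩
  · refine Measurable.find (f := fun n a => extract (step^[n] a)) (p := p)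
      (fun n => hextract.comp (hstep.iterate n)) (fun n => ?_) hex
    have h1 : MeasurableSet {a : α | extract (step^[n] a) ≠ bot} :=
      ((hextract.comp (hstep.iterate n)) hbot).compl
    have h2 : MeasurableSet {a : α | ∀ k : ℕ, extract (step^[k] a) = bot} := by
      have : {a : α | ∀ k : ℕ, extract (step^[k] a) = bot} =
          ⋂ k : ℕ, (fun a => extract (step^[k] a)) ⁻¹' {bot} := by
        ext a; simp [Set.mem_iInter, Set.mem_preimage]
      rw [this]
      exact MeasurableSet.iInter fun k => (hextract.comp (hstep.iterate k)) hbot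
    exact h1.union h2
  · intro a n hn
    have hpn : p n a := Or.inl hn
    have hle : Nat.find (hex a) ≤ n := Nat.find_le hpn
    have hfind : p (Nat.find (hex a)) a := Nat.find_spec (hex a)
    have hne : extract (step^[Nat.find (hex a)] a) ≠ bot := by
      rcases hfind with h | h
      · exact h
      · exact absurd (h n) hn
    exact (key a _ n hle hne).symm
  · intro a hall
    exact hall _
end

section
/- Let p : 𝕊 → ℝ≥0∞ be a measurable function taking only the values 0 and 1 that is a prefix-free indicator. Then for every k ∈ ℕ, the sum over i ≤ k of the lower Lebesgue integrals of p over the slices {s ∈ 𝕊 | s.1 = i} with respect to the trace measure μ_𝕊 is at most 1; equivalently, ∫⁻_{ {s | s.1 = k} } p dμ_𝕊 ≤ 1 − Σ_{i < k} ∫⁻_{ {s | s.1 = i} } p dμ_𝕊. -/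
open MeasureTheory ENNReal

/-- The trace space: finite sequences of reals of arbitrary length. -/
abbrev Trace : Type := Σ n : ℕ, (Fin n → ℝ)

/-- The trace measure on `Trace`: the sum over `n` of the pushforwards along `Sigma.mk n` of
`n`-dimensional Lebesgue measure restricted to the unit cube. -/
noncomputable def traceMeasure : Measure Trace :=
  Measure.sum fun n : ℕ =>
    Measure.map (Sigma.mk n)
      (volume.restrict {f : Fin n → ℝ | ∀ i, f i ∈ Set.Icc (0 : ℝ) 1})

/-- `s'` is a proper prefix of `s`: it is strictly shorter and agrees with `s` on its
first coordinates. -/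
def ProperPrefix (s' s : Trace) : Prop :=
  ∃ h : s'.1 < s.1, ∀ i : Fin s'.1, s'.2 i = s.2 (Fin.castLE h.le i)

/-- `p` is a prefix-free indicator: it is measurable, takes only the values `0` and `1`, and
whenever `p s = 1` then `p s' = 0` for every proper prefix `s'` of `s` and every proper
extension `s'` of `s`. -/
def IsPrefixFreeIndicator (p : Trace → ℝ≥0∞) : Prop :=
  Measurable p ∧ (∀ s : Trace, p s = 0 ∨ p s = 1) ∧
    ∀ s : Trace, p s = 1 → ∀ s' : Trace, (ProperPrefix s' s ∨ ProperPrefix s s') → p s' = 0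

namespace PF

lemma measurable_mk (n : ℕ) : Measurable (@Sigma.mk ℕ (fun n => Fin n → ℝ) n) :=
  measurable_iff_le_map.2
    (iInf_le (fun a => MeasurableSpace.map (Sigma.mk a) inferInstance) n)

lemma measurableSet_of_preimages {S : Set Trace}
    (h : ∀ n, MeasurableSet (Sigma.mk n ⁻¹' S)) : MeasurableSet S :=
  MeasurableSpace.measurableSet_iInf.2 fun n => (MeasurableSpace.map_def).2 (h n)

lemma measurableSet_slice (i : ℕ) : MeasurableSet {s : Trace | s.1 = i} := by
  apply measurableSet_of_preimages
  intro n
  by_cases h : n = i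
  · subst h
    convert MeasurableSet.univ
    ext f; simp
  · convert MeasurableSet.empty
    ext f; simp [h]

/-- The unit cube. -/
def cube (n : ℕ) : Set (Fin n → ℝ) := {f | ∀ i, f i ∈ Set.Icc (0 : ℝ) 1}

lemma cube_eq_pi (n : ℕ) : cube n = Set.pi Set.univ (fun _ : Fin n => Set.Icc (0 : ℝ) 1) := by
  ext f
  simp only [cube, Set.mem_setOf_eq, Set.mem_pi, Set.mem_univ, true_implies]

lemma measurableSet_cube (n : ℕ) : MeasurableSet (cube n) := by
  rw [cube_eq_pi]; exact MeasurableSet.univ_pi fun _ => measurableSet_Icc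

lemma volume_cube (n : ℕ) : volume (cube n) = 1 := by
  rw [cube_eq_pi, volume_pi_pi]
  simp [Real.volume_Icc]

variable (p : Trace → ℝ≥0∞)

/-- The set of sequences of length `i` where `p` equals one. -/
def A (i : ℕ) : Set (Fin i → ℝ) := {f | p ⟨i, f⟩ = 1}

lemma measurableSet_A (hp : Measurable p) (i : ℕ) : MeasurableSet (A p i) :=
  (measurable_mk i) ((hp (measurableSet_singleton 1)))

/-- The cylinder over `A p i` inside the length-`k` cube. -/
def Cyl (i k : ℕ) : Set (Fin k → ℝ) :=
  {f | ∃ h : i ≤ k, (fun j : Fin i => f (Fin.castLE h j)) ∈ A p i} ∩ cube k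

lemma measurableSet_Cyl (hp : Measurable p) (i k : ℕ) : MeasurableSet (Cyl p i k) := by
  by_cases h : i ≤ k
  · have : Cyl p i k =
        ((fun f : Fin k → ℝ => fun j : Fin i => f (Fin.castLE h j)) ⁻¹' A p i) ∩ cube k := by
      unfold Cyl
      congr 1
      ext f
      simp only [Set.mem_setOf_eq, Set.mem_preimage]
      exact ⟨fun ⟨_, hf⟩ => hf, fun hf => ⟨h, hf⟩⟩
    rw [this]
    exact ((measurable_pi_lambda _ fun j => measurable_pi_apply _)
      (measurableSet_A p hp i)).inter (measurableSet_cube k)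
  · have : Cyl p i k = ∅ := by
      unfold Cyl
      ext f
      simp only [Set.mem_inter_iff, Set.mem_setOf_eq, Set.mem_empty_iff_false, iff_false]
      rintro ⟨⟨h', _⟩, _⟩
      exact h h'
    rw [this]; exact MeasurableSet.empty

lemma Cyl_self (i : ℕ) : Cyl p i i = A p i ∩ cube i := by
  unfold Cyl
  congr 1
  ext f
  simp only [Set.mem_setOf_eq]
  have key : ∀ (h : i ≤ i), (fun j : Fin i => f (Fin.castLE h j)) = f := by
    intro h; funext j; congr 1
  constructor
  · rintro ⟨h, hf⟩
    rwa [key h] at hf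
  · intro hf
    exact ⟨le_refl i, by rwa [key]⟩

lemma Cyl_succ (hp : Measurable p) (i k : ℕ) (h : i ≤ k) :
    volume (Cyl p i (k + 1)) = volume (Cyl p i k) := by
  set e := MeasurableEquiv.piFinSuccAbove (fun _ : Fin (k + 1) => ℝ) (Fin.last k) with he
  have hmp : MeasurePreserving e volume volume :=
    volume_preserving_piFinSuccAbove (fun _ : Fin (k + 1) => ℝ) (Fin.last k)
  have hset : Cyl p i (k + 1) = e ⁻¹' (Set.Icc (0 : ℝ) 1 ×ˢ Cyl p i k) := by
    ext f
    have he' : e f = (f (Fin.last k), fun j : Fin k => f ((Fin.last k).succAbove j)) := rfl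
    simp only [Set.mem_preimage, he', Set.mem_prod, Cyl, Set.mem_inter_iff, Set.mem_setOf_eq,
      cube]
    have key : ∀ (h1 : i ≤ k) (h2 : i ≤ k + 1),
        (fun j : Fin i => f ((Fin.last k).succAbove (Fin.castLE h1 j))) =
        (fun j : Fin i => f (Fin.castLE h2 j)) := by
      intro h1 h2
      funext j
      congr 1
      rw [Fin.succAbove_last]
      exact Fin.ext rfl
    constructor
    · rintro ⟨⟨h', hf⟩, hc⟩
      refine ⟨hc _, ⟨h, by rw [key h h']; exact hf⟩, fun j => hc _⟩
    · rintro ⟨hlast, ⟨h', hf⟩, hc⟩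
      refine ⟨⟨le_trans h (Nat.le_succ k), by rw [← key h' (le_trans h' (Nat.le_succ k))]; exact hf⟩, ?_⟩
      · intro m
        rcases Fin.eq_castSucc_or_eq_last m with ⟨j, rfl⟩ | rfl
        · have := hc j
          rwa [Fin.succAbove_last] at this
        · exact hlast
  rw [hset, hmp.measure_preimage
    ((measurableSet_Icc.prod (measurableSet_Cyl p hp i k)).nullMeasurableSet),
    Measure.volume_eq_prod, Measure.prod_prod, Real.volume_Icc]
  simp

lemma volume_Cyl (hp : Measurable p) (i k : ℕ) (h : i ≤ k) :
    volume (Cyl p i k) = volume (A p i ∩ cube i) := by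
  induction k with
  | zero =>
    have : i = 0 := Nat.le_zero.mp h
    subst this
    rw [Cyl_self]
  | succ k ih =>
    rcases Nat.lt_or_ge i (k + 1) with h' | h'
    · rw [Cyl_succ p hp i k (Nat.lt_succ_iff.mp h'), ih (Nat.lt_succ_iff.mp h')]
    · have : i = k + 1 := le_antisymm h h'
      subst this
      rw [Cyl_self]

/-- The slice integral equals the volume of `A p i ∩ cube i`. -/
lemma slice_integral (hp : Measurable p) (hp01 : ∀ s : Trace, p s = 0 ∨ p s = 1) (i : ℕ) :
    ∫⁻ s in {s : Trace | s.1 = i}, p s ∂traceMeasure = volume (A p i ∩ cube i) := by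
  have hS := measurableSet_slice i
  rw [traceMeasure, Measure.restrict_sum_of_countable, lintegral_sum_measure]
  rw [tsum_eq_single i ?h]
  case h =>
    intro n hn
    rw [Measure.restrict_map (measurable_mk n) hS]
    have : (Sigma.mk n ⁻¹' {s : Trace | s.1 = n ∧ False}) = ∅ := by ext; simp
    have hpre : (Sigma.mk n ⁻¹' {s : Trace | s.1 = i}) = ∅ := by
      ext f; simp [hn]
    rw [hpre, Measure.restrict_empty, Measure.map_zero, lintegral_zero_measure]
  · rw [Measure.restrict_map (measurable_mk i) hS]
    have hpre : (Sigma.mk i ⁻¹' {s : Trace | s.1 = i}) = Set.univ := by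
      ext f; simp
    rw [hpre, Measure.restrict_univ, lintegral_map hp (measurable_mk i)]
    have : ∀ f : Fin i → ℝ, p ⟨i, f⟩ = Set.indicator (A p i) (fun _ => 1) f := by
      intro f
      by_cases hf : f ∈ A p i
      · rw [Set.indicator_of_mem hf]; exact hf
      · rw [Set.indicator_of_notMem hf]
        rcases hp01 ⟨i, f⟩ with h0 | h1
        · exact h0
        · exact absurd h1 hf
    calc ∫⁻ f, p ⟨i, f⟩ ∂(volume.restrict {f : Fin i → ℝ | ∀ j, f j ∈ Set.Icc (0:ℝ) 1})
        = ∫⁻ f, Set.indicator (A p i) (fun _ => 1) f ∂(volume.restrict (cube i)) := by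
          exact lintegral_congr this
      _ = ∫⁻ f in A p i, 1 ∂(volume.restrict (cube i)) :=
          lintegral_indicator (measurableSet_A p hp i) _
      _ = (volume.restrict (cube i)) (A p i) := setLIntegral_one _
      _ = volume (A p i ∩ cube i) := Measure.restrict_apply (measurableSet_A p hp i)

end PF

/-- For a prefix-free indicator `p`, the sum over `i ≤ k` of the lower integrals of `p` over the
length-`i` slices of the trace space (w.r.t. the trace measure) is at most `1`. -/
theorem prefixFree_partial_sums_le_one (p : Trace → ℝ≥0∞) (hp : IsPrefixFreeIndicator p) :
    ∀ k : ℕ, ∑ i ∈ Finset.range (k + 1),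
      ∫⁻ s in {s : Trace | s.1 = i}, p s ∂traceMeasure ≤ 1 := by
  obtain ⟨hmeas, hp01, hpf⟩ := hp
  intro k
  have h1 : ∀ i ∈ Finset.range (k + 1),
      ∫⁻ s in {s : Trace | s.1 = i}, p s ∂traceMeasure = volume (PF.Cyl p i k) := by
    intro i hi
    rw [PF.slice_integral p hmeas hp01 i,
      PF.volume_Cyl p hmeas i k (Nat.lt_succ_iff.mp (Finset.mem_range.mp hi))]
  rw [Finset.sum_congr rfl h1]
  have hdisj : (↑(Finset.range (k + 1)) : Set ℕ).PairwiseDisjoint (fun i => PF.Cyl p i k) := by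
    intro i hi j hj hij
    wlog hlt : i < j generalizing i j
    · exact (this hj hi hij.symm (by omega)).symm
    refine Set.disjoint_left.mpr ?_
    rintro f ⟨⟨hik, hfi⟩, _⟩ ⟨⟨hjk, hfj⟩, _⟩
    have hpfx : ProperPrefix ⟨i, fun m : Fin i => f (Fin.castLE hik m)⟩
        ⟨j, fun m : Fin j => f (Fin.castLE hjk m)⟩ := by
      refine ⟨hlt, ?_⟩
      intro m
      simp only
      congr 1
    have := hpf _ hfj _ (Or.inl hpfx)
    rw [hfi] at this
    exact one_ne_zero this
  calc ∑ i ∈ Finset.range (k + 1), volume (PF.Cyl p i k)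
      = volume (⋃ i ∈ Finset.range (k + 1), PF.Cyl p i k) :=
        (measure_biUnion_finset hdisj (fun i _ => PF.measurableSet_Cyl p hmeas i k)).symm
    _ ≤ volume (PF.cube k) := by
        apply measure_mono
        refine Set.iUnion₂_subset fun i _ => ?_
        exact Set.inter_subset_right
    _ = 1 := PF.volume_cube k
end

section
/- Let p : 𝕊 → ℝ≥0∞ be a measurable function taking only the values 0 and 1 that is a prefix-free indicator. Then the lower Lebesgue integral of p over all of 𝕊 with respect to the trace measure μ_𝕊 is at most 1: ∫⁻ p dμ_𝕊 ≤ 1. Equivalently, the measure μ_𝕊.withDensity p is a sub-probability measure on 𝕊. -/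
open MeasureTheory ENNReal

lemma measurable_sigmaMk' {α} {β : α → Type*} [∀ a, MeasurableSpace (β a)] (a : α) :
    Measurable (@Sigma.mk α β a) := fun _ hs => MeasurableSpace.measurableSet_iInf.mp hs a

noncomputable def cube (n : ℕ) : Set (Fin n → ℝ) := {f | ∀ i, f i ∈ Set.Icc (0 : ℝ) 1}

lemma cube_eq (n : ℕ) : cube n = Set.pi Set.univ (fun _ : Fin n => Set.Icc (0:ℝ) 1) := by
  ext f; simp only [cube, Set.mem_setOf_eq, Set.mem_univ_pi]

lemma cube_measurable (n : ℕ) : MeasurableSet (cube n) := by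
  rw [cube_eq]; exact MeasurableSet.univ_pi (fun _ => measurableSet_Icc)

lemma cube_volume (n : ℕ) : volume (cube n) = 1 := by
  rw [cube_eq, volume_pi_pi]
  simp [Real.volume_Icc]

lemma key_slice {n N : ℕ} (h : n ≤ N) {S : Set (Fin n → ℝ)} (hS : MeasurableSet S) :
    volume {f : Fin N → ℝ | f ∈ cube N ∧ (fun i : Fin n => f (Fin.castLE h i)) ∈ S}
      = volume (S ∩ cube n) := by
  set m := N - n with hm
  have hNm : n + m = N := Nat.add_sub_cancel' h
  set e : Fin n ⊕ Fin m ≃ Fin N := finSumFinEquiv.trans (finCongr hNm) with he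
  set E : (Fin N → ℝ) ≃ᵐ (Fin n → ℝ) × (Fin m → ℝ) :=
    (MeasurableEquiv.piCongrLeft (fun _ : Fin N => ℝ) e).symm.trans
      (MeasurableEquiv.sumPiEquivProdPi (fun _ => ℝ)) with hE
  have MP : MeasurePreserving E volume volume :=
    (volume_measurePreserving_sumPiEquivProdPi _).comp
      ((volume_measurePreserving_piCongrLeft _ e).symm)
  have hEapp : ∀ f : Fin N → ℝ,
      E f = (fun i : Fin n => f (e (Sum.inl i)), fun j : Fin m => f (e (Sum.inr j))) := by
    intro f
    rfl
  have hset : {f : Fin N → ℝ | f ∈ cube N ∧ (fun i : Fin n => f (Fin.castLE h i)) ∈ S}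
      = E ⁻¹' ((S ∩ cube n) ×ˢ cube m) := by
    ext f
    have hcube : f ∈ cube N ↔
        ((fun i : Fin n => f (e (Sum.inl i))) ∈ cube n ∧
         (fun j : Fin m => f (e (Sum.inr j))) ∈ cube m) := by
      simp only [cube, Set.mem_setOf_eq]
      constructor
      · intro H; exact ⟨fun i => H _, fun j => H _⟩
      · rintro ⟨H1, H2⟩ k
        obtain ⟨x, rfl⟩ := e.surjective k
        cases x with
        | inl i => exact H1 i
        | inr j => exact H2 j
    have hfst : (fun i : Fin n => f (e (Sum.inl i))) = fun i : Fin n => f (Fin.castLE h i) := by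
      funext i
      have hi : e (Sum.inl i) = Fin.castLE h i := Fin.ext (by simp [he])
      rw [hi]
    simp only [Set.mem_preimage, hEapp f, Set.mem_prod, Set.mem_inter_iff, Set.mem_setOf_eq]
    rw [hfst]
    constructor
    · rintro ⟨hc, hs⟩
      have := hcube.mp hc
      exact ⟨⟨hs, this.1⟩, this.2⟩
    · rintro ⟨⟨hs, h1⟩, h2⟩
      exact ⟨hcube.mpr ⟨h1, h2⟩, hs⟩
  rw [hset, MP.measure_preimage
      (((hS.inter (cube_measurable n)).prod (cube_measurable m)).nullMeasurableSet)]
  rw [show (volume : Measure ((Fin n → ℝ) × (Fin m → ℝ))) = (volume : Measure (Fin n → ℝ)).prod volume from rfl]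
  rw [Measure.prod_prod, cube_volume, mul_one]


/-- For a prefix-free indicator `p`, the lower integral of `p` over the whole trace space with
respect to the trace measure is at most `1`; i.e. `traceMeasure.withDensity p` is a
sub-probability measure. -/
theorem prefixFree_lintegral_le_one (p : Trace → ℝ≥0∞) (hp : IsPrefixFreeIndicator p) :
    ∫⁻ s, p s ∂traceMeasure ≤ 1 := by
  obtain ⟨hm, h01, hpf⟩ := hp
  simp only [ProperPrefix] at hpf
  rw [traceMeasure]
  set A : ∀ n : ℕ, Set (Fin n → ℝ) := fun n => {f | p ⟨n, f⟩ = 1} with hA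
  have hAmeas : ∀ n, MeasurableSet (A n) := fun n =>
    (hm.comp (measurable_sigmaMk' n)) (measurableSet_singleton 1)
  have hrepr : ∫⁻ s, p s ∂(Measure.sum fun n : ℕ =>
      Measure.map (Sigma.mk n) (volume.restrict {f : Fin n → ℝ | ∀ i, f i ∈ Set.Icc (0:ℝ) 1}))
      = ∑' n : ℕ, volume (A n ∩ cube n) := by
    rw [lintegral_sum_measure]
    congr 1; funext n
    rw [lintegral_map hm (measurable_sigmaMk' n)]
    have hind : ∀ f : Fin n → ℝ, p ⟨n, f⟩ = (A n).indicator 1 f := by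
      intro f
      rcases h01 ⟨n, f⟩ with h0 | h1
      · rw [h0, Set.indicator_of_notMem]
        simp only [hA, Set.mem_setOf_eq, h0]
        exact zero_ne_one
      · have hmem : f ∈ A n := h1
        rw [h1, Set.indicator_of_mem hmem]
        rfl
    simp_rw [hind]
    rw [lintegral_indicator_one (hAmeas n), Measure.restrict_apply (hAmeas n)]
    rfl
  have hpartial : ∀ N : ℕ, ∑ n ∈ Finset.range N, volume (A n ∩ cube n) ≤ 1 := by
    intro N
    set r : ∀ n : ℕ, (Fin N → ℝ) → (Fin n → ℝ) := fun n f i =>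
      if h : (i : ℕ) < N then f ⟨i, h⟩ else 0 with hr
    have hrmeas : ∀ n, Measurable (r n) := fun n =>
      measurable_pi_lambda _ fun i => by
        by_cases h : (i : ℕ) < N
        · simpa [hr, h] using measurable_pi_apply (⟨i, h⟩ : Fin N)
        · simpa [hr, h] using measurable_const
    set B : ℕ → Set (Fin N → ℝ) := fun n => cube N ∩ (r n ⁻¹' A n) with hB
    have hBmeas : ∀ n, MeasurableSet (B n) :=
      fun n => (cube_measurable N).inter ((hrmeas n) (hAmeas n))
    have hBvol : ∀ n < N, volume (B n) = volume (A n ∩ cube n) := by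
      intro n hn
      have hrn : ∀ f : Fin N → ℝ, r n f = fun i : Fin n => f (Fin.castLE hn.le i) := by
        intro f; funext i
        have : (i : ℕ) < N := lt_of_lt_of_le i.isLt hn.le
        simp only [hr, dif_pos this]
        rfl
      have : B n = {f : Fin N → ℝ | f ∈ cube N ∧ (fun i : Fin n => f (Fin.castLE hn.le i)) ∈ A n} := by
        ext f
        simp only [hB, Set.mem_inter_iff, Set.mem_preimage, Set.mem_setOf_eq, hrn f]
      rw [this, key_slice hn.le (hAmeas n)]
    have hkey : ∀ n m : ℕ, n < m → m < N → Disjoint (B n) (B m) := by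
      intro n m hlt _
      refine Set.disjoint_left.mpr ?_
      rintro f ⟨_, hfn⟩ ⟨_, hfm⟩
      have h1m : p ⟨m, r m f⟩ = 1 := hfm
      have h1n : p ⟨n, r n f⟩ = 1 := hfn
      have hpre : ∃ h : (⟨n, r n f⟩ : Σ k, Fin k → ℝ).1 < (⟨m, r m f⟩ : Σ k, Fin k → ℝ).1,
          ∀ i : Fin n, r n f i = r m f (Fin.castLE h.le i) := by
        refine ⟨hlt, fun i => ?_⟩
        have hiN : (i : ℕ) < N := by omega
        simp only [hr, Fin.coe_castLE, dif_pos hiN]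
      have := hpf ⟨m, r m f⟩ h1m ⟨n, r n f⟩ (Or.inl hpre)
      rw [this] at h1n
      exact zero_ne_one h1n
    have hdisj : Set.PairwiseDisjoint (↑(Finset.range N) : Set ℕ) B := by
      intro n hn m hmm hnm
      simp only [Finset.coe_range, Set.mem_Iio] at hn hmm
      rcases lt_or_gt_of_ne hnm with h | h
      · exact hkey n m h hmm
      · exact (hkey m n h hn).symm
    calc ∑ n ∈ Finset.range N, volume (A n ∩ cube n)
        = ∑ n ∈ Finset.range N, volume (B n) := by
          refine Finset.sum_congr rfl fun n hn => ?_
          exact (hBvol n (Finset.mem_range.mp hn)).symm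
      _ = volume (⋃ n ∈ Finset.range N, B n) :=
          (measure_biUnion_finset hdisj fun n _ => hBmeas n).symm
      _ ≤ volume (cube N) := by
          refine measure_mono ?_
          simp only [Set.iUnion_subset_iff]
          intro n _; exact Set.inter_subset_left
      _ = 1 := cube_volume N
  rw [hrepr, ENNReal.tsum_eq_iSup_nat]
  exact iSup_le hpartial
end
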